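/- Let L > 0 and N ≥ 2. Let f : ℝ → ℝ be antitone on [0, L/2] and strictly convex on [0, L/2]. If a configuration x_1, …, x_N of points of ℝ/Lℤ satisfies Σ_{j≠k} f(dist(x_j, x_k)) = Σ_{j≠k} f(dist(z_j, z_k)), where z_j = j·(L/N) mod L, then the configuration is itself equally spaced: there exist c ∈ ℝ/Lℤ and a permutation σ of {1,…,N} such that x_{σ(j)} = c + j·(L/N) mod L for all j. In other words, up to translation along the circle, equally spaced points are the unique minimizers of the geodesic f-energy. -/

import Mathlib

/-!
Sort the points around the circle as `w 0, …, w (N-1)`; the consecutive gaps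
`dist (w i) (w (i+1))` then add up to at most `L`. Going around the shorter way, the triangle
inequality bounds `∑ i, dist (w i) (w (i+m))` by `min m (N-m) * L`, so Jensen's inequality and
monotonicity give `∑ i, f (dist (w i) (w (i+m))) ≥ N f (min m (N-m) * L / N)`, which is exactly
the contribution of the chord class `m` to the energy of the equally spaced configuration.
Equal total energies force equality in every class, in particular for neighbours (`m = 1`), and
strict convexity then makes every gap equal to `L / N`.
-/

open Finset

/-- The geodesic `f`-energy of a configuration of `N` points on the circle `ℝ/Lℤ`. -/
noncomputable def geodesicEnergy {N : ℕ} (L : ℝ) (f : ℝ → ℝ) (x : Fin N → AddCircle L) : ℝ :=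
  ∑ j : Fin N, ∑ k : Fin N, if j ≠ k then f (dist (x j) (x k)) else 0

open Fin.NatCast Fin.CommRing

section Jensen

variable {D : Set ℝ} {f : ℝ → ℝ} {ι : Type*} [Fintype ι] [Nonempty ι]

theorem StrictConvexOn.strictAntiOn_of_antitoneOn (hconv : StrictConvexOn ℝ D f)
    (hanti : AntitoneOn f D) : StrictAntiOn f D := by
  intro a ha b hb hab
  have hhalf : (0 : ℝ) < 1 / 2 := by norm_num
  have hmid : (1 / 2 : ℝ) • a + (1 / 2 : ℝ) • b ∈ D :=
    hconv.1 ha hb hhalf.le hhalf.le (by norm_num)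
  have hlt := hconv.2 ha hb hab.ne hhalf hhalf (by norm_num)
  have hle := hanti hmid hb (by simp only [smul_eq_mul]; linarith)
  simp only [smul_eq_mul] at hlt hle
  linarith [hanti ha hb hab.le]

theorem card_mul_le_sum_of_convexOn_of_antitoneOn (hconv : ConvexOn ℝ D f)
    (hanti : AntitoneOn f D) {t : ι → ℝ} (ht : ∀ i, t i ∈ D) {s : ℝ} (hs : s ∈ D)
    (hsum : ∑ i, t i ≤ Fintype.card ι * s) :
    Fintype.card ι * f s ≤ ∑ i, f (t i) := by
  set n : ℝ := (Fintype.card ι : ℝ)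
  have hn : 0 < n := by positivity
  have hw : ∑ _i : ι, n⁻¹ = 1 := by simp [n]
  have hmean : ∑ i, n⁻¹ • t i ∈ D :=
    hconv.1.sum_mem (fun _ _ => by positivity) hw fun i _ => ht i
  have hjensen := hconv.map_sum_le (t := univ) (fun _ _ => by positivity) hw fun i _ => ht i
  simp only [smul_eq_mul, ← mul_sum] at hjensen hmean
  have hmono := hanti hmean hs (by rw [inv_mul_le_iff₀ hn]; linarith)
  have := mul_le_mul_of_nonneg_left (hmono.trans hjensen) hn.le
  rwa [mul_inv_cancel_left₀ hn.ne'] at this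

theorem eq_of_sum_le_of_strictConvexOn_of_antitoneOn (hconv : StrictConvexOn ℝ D f)
    (hanti : AntitoneOn f D) {t : ι → ℝ} (ht : ∀ i, t i ∈ D) {s : ℝ} (hs : s ∈ D)
    (hsum : ∑ i, t i ≤ Fintype.card ι * s) (hfsum : ∑ i, f (t i) ≤ Fintype.card ι * f s) :
    ∀ i, t i = s := by
  set n : ℝ := (Fintype.card ι : ℝ)
  have hn : 0 < n := by positivity
  have hw : ∑ _i : ι, n⁻¹ = 1 := by simp [n]
  set μ := ∑ i, n⁻¹ • t i
  have hmean : μ ∈ D := hconv.1.sum_mem (fun _ _ => by positivity) hw fun i _ => ht i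
  have hμs : μ ≤ s := by
    simp only [μ, smul_eq_mul, ← mul_sum]; rw [inv_mul_le_iff₀ hn]; linarith
  have hjensen :=
    hconv.convexOn.map_sum_le (t := univ) (fun _ _ => by positivity) hw fun i _ => ht i
  have hmono := hanti hmean hs hμs
  have hfavg : ∑ i, n⁻¹ • f (t i) ≤ f s := by
    simp only [smul_eq_mul, ← mul_sum]; rw [inv_mul_le_iff₀ hn]; exact hfsum
  have hfμ : f μ = ∑ i, n⁻¹ • f (t i) := le_antisymm hjensen (hfavg.trans hmono)
  have hμ : μ = s :=
    (hconv.strictAntiOn_of_antitoneOn hanti).injOn hmean hs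
      (le_antisymm (hfμ.le.trans hfavg) hmono)
  intro i
  rw [← hμ]
  exact (hconv.map_sum_eq_iff (fun _ _ => by positivity) hw fun i _ => ht i).1 hfμ i (mem_univ i)

end Jensen

theorem eq_add_mul_of_le_sub_succ {Y : ℕ → ℝ} {a : ℝ} {N : ℕ}
    (hstep : ∀ n < N, a ≤ Y (n + 1) - Y n)
    (htotal : Y N ≤ Y 0 + N * a) : ∀ n ≤ N, Y n = Y 0 + n * a := by
  have hmono : MonotoneOn (fun n : ℕ => Y n - n * a) (Set.Iic N) :=
    monotoneOn_of_le_succ Set.ordConnected_Iic fun n _ _ hn => by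
      have := hstep n (Order.succ_le_iff.1 hn)
      simp only [Order.succ_eq_add_one, Nat.cast_add, Nat.cast_one]
      linarith
  intro n hn
  have h0 := hmono (Set.mem_Iic.2 N.zero_le) (Set.mem_Iic.2 hn) n.zero_le
  have hlast := hmono (Set.mem_Iic.2 hn) (Set.mem_Iic.2 le_rfl) hn
  simp only [Nat.cast_zero, zero_mul, sub_zero] at h0 hlast
  linarith

section Cyclic

variable {X : Type*} [PseudoMetricSpace X] {N : ℕ} [NeZero N]

theorem sum_dist_add_natCast_le (w : Fin N → X) (k : ℕ) :
    ∑ i, dist (w i) (w (i + k)) ≤ k * ∑ i, dist (w i) (w (i + 1)) := by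
  have hchain (i : Fin N) :
      dist (w i) (w (i + k)) ≤ ∑ s ∈ range k, dist (w (i + s)) (w (i + s + 1)) := by
    simpa [add_assoc] using dist_le_range_sum_dist (fun n : ℕ => w (i + n)) k
  calc ∑ i, dist (w i) (w (i + k))
      ≤ ∑ i, ∑ s ∈ range k, dist (w (i + s)) (w (i + s + 1)) :=
        sum_le_sum fun i _ => hchain i
    _ = ∑ s ∈ range k, ∑ i, dist (w (i + s)) (w (i + s + 1)) := sum_comm
    _ = ∑ s ∈ range k, ∑ i, dist (w i) (w (i + 1)) := by
      refine sum_congr rfl fun s _ => ?_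
      exact Fintype.sum_equiv (Equiv.addRight (s : Fin N)) _ _ fun i => rfl
    _ = k * ∑ i, dist (w i) (w (i + 1)) := by rw [sum_const, card_range, nsmul_eq_mul]

theorem sum_dist_add_le_min (w : Fin N → X) (m : Fin N) :
    ∑ i, dist (w i) (w (i + m))
      ≤ min ((m : ℕ) : ℝ) (N - (m : ℕ)) * ∑ i, dist (w i) (w (i + 1)) := by
  have hfwd := sum_dist_add_natCast_le w m
  have hbwd := sum_dist_add_natCast_le w (N - m)
  rw [Fin.cast_val_eq_self] at hfwd
  have hneg : (((N - m : ℕ) : Fin N)) = -m := by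
    rw [Nat.cast_sub m.isLt.le, Fin.natCast_self, Fin.cast_val_eq_self, zero_sub]
  have hsymm :
      ∑ i, dist (w i) (w (i + ((N - m : ℕ) : Fin N))) = ∑ i, dist (w i) (w (i + m)) := by
    rw [hneg]
    refine Fintype.sum_equiv (Equiv.subRight m) _ _ fun i => ?_
    rw [Equiv.subRight_apply, sub_add_cancel, dist_comm, sub_eq_add_neg]
  rw [hsymm, Nat.cast_sub m.isLt.le] at hbwd
  rw [min_mul_of_nonneg _ _ (sum_nonneg fun i _ => dist_nonneg)]
  exact le_min hfwd hbwd

end Cyclic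

namespace AddCircle

variable {L : ℝ}

theorem dist_coe_le_abs_sub (a b : ℝ) : dist (a : AddCircle L) b ≤ |a - b| := by
  rw [dist_eq_norm, ← coe_sub]
  exact QuotientAddGroup.norm_mk_le_norm

theorem dist_le_half_period (hL : 0 < L) (a b : AddCircle L) : dist a b ≤ L / 2 := by
  simpa [dist_eq_norm, abs_of_pos hL] using norm_le_half_period L hL.ne' (x := a - b)

theorem norm_coe_eq_min (hL : 0 < L) {t : ℝ} (ht₀ : 0 ≤ t) (htL : t ≤ L) :
    ‖(t : AddCircle L)‖ = min t (L - t) := by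
  rcases le_total t (L / 2) with h | h
  · rw [min_eq_left (by linarith), (norm_coe_eq_abs_iff L hL.ne').2 (by
      rw [abs_of_nonneg ht₀, abs_of_pos hL]; exact h), abs_of_nonneg ht₀]
  · have hshift : (t : AddCircle L) = ((t - L : ℝ) : AddCircle L) := by
      rw [← coe_add_period L (t - L), sub_add_cancel]
    rw [min_eq_right (by linarith), hshift, (norm_coe_eq_abs_iff L hL.ne').2 (by
      rw [abs_of_nonpos (by linarith), abs_of_pos hL]; linarith), abs_of_nonpos (by linarith)]
    ring

theorem exists_perm_monotone_lift (hL : 0 < L) {N : ℕ} [NeZero N]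
    (x : Fin N → AddCircle L) :
    ∃ (σ : Equiv.Perm (Fin N)) (Y : ℕ → ℝ),
      Monotone Y ∧ Y N = Y 0 + L ∧ ∀ n ≤ N, x (σ n) = Y n := by
  have := Fact.mk hL
  set r : Fin N → ℝ := fun i => equivIco L 0 (x i)
  have hr_mem (i : Fin N) : r i ∈ Set.Ico 0 L := by
    simpa using (equivIco L 0 (x i)).2
  have hr_coe (i : Fin N) : (r i : AddCircle L) = x i :=
    (equivIco L 0).symm_apply_apply (x i)
  set σ := Tuple.sort r
  have hmono : Monotone (r ∘ σ) := Tuple.monotone_sort r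
  let Y : ℕ → ℝ := fun n => if h : n < N then r (σ ⟨n, h⟩) else r (σ 0) + L
  have hY0 : Y 0 = r (σ 0) := by simp [Y, NeZero.pos N]
  refine ⟨σ, Y, monotone_nat_of_le_succ fun n => ?_, by simp [Y, hY0], fun n hn => ?_⟩
  · simp only [Y]
    split_ifs with h₁ h₂ h₂
    · exact hmono (Fin.mk_le_mk.2 n.le_succ)
    · linarith [(hr_mem (σ ⟨n, h₁⟩)).2, (hr_mem (σ 0)).1]
    · omega
    · rfl
  · rcases hn.lt_or_eq with h | rfl
    · simp [Y, h, ← hr_coe, Fin.natCast_eq_mk]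
    · simp [Y, ← hr_coe]

end AddCircle

noncomputable def equallySpaced (L : ℝ) (N : ℕ) (j : Fin N) : AddCircle L :=
  (((j : ℕ) : ℝ) * (L / N) : ℝ)

section EquallySpaced

variable {L : ℝ} {N : ℕ}

theorem equallySpaced_add [NeZero N] (i m : Fin N) :
    equallySpaced L N (i + m) = equallySpaced L N i + equallySpaced L N m := by
  have hN : (N : ℝ) ≠ 0 := Nat.cast_ne_zero.2 (NeZero.ne N)
  have hperiod (k : ℕ) : (((k : ℝ) * L : ℝ) : AddCircle L) = 0 := by
    rw [← nsmul_eq_mul, AddCircle.coe_nsmul, AddCircle.coe_period, smul_zero]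
  have hsplit : (((i : ℕ) + m : ℕ) : ℝ) * (L / N)
      = (((i + m : Fin N) : ℕ) : ℝ) * (L / N) + ((((i : ℕ) + m) / N : ℕ) : ℝ) * L := by
    conv_lhs => rw [← Nat.mod_add_div ((i : ℕ) + m) N]
    rw [Fin.val_add]
    push_cast
    field_simp
  simp only [equallySpaced, ← AddCircle.coe_add, ← add_mul, ← Nat.cast_add]
  rw [hsplit, AddCircle.coe_add, hperiod, add_zero]

theorem norm_equallySpaced (hL : 0 < L) (m : Fin N) :
    ‖equallySpaced L N m‖ = min ((m : ℕ) * (L / N)) (L - (m : ℕ) * (L / N)) := by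
  have hN : (0 : ℝ) < N := by exact_mod_cast m.pos
  have hm : ((m : ℕ) : ℝ) ≤ N := by exact_mod_cast m.isLt.le
  refine AddCircle.norm_coe_eq_min hL (by positivity) ?_
  calc ((m : ℕ) : ℝ) * (L / N) ≤ N * (L / N) := by gcongr
    _ = L := by field_simp

theorem norm_equallySpaced_one [NeZero N] (hL : 0 < L) (hN : 2 ≤ N) :
    ‖equallySpaced L N 1‖ = L / N := by
  have hN' : (2 : ℝ) ≤ N := by exact_mod_cast hN
  rw [norm_equallySpaced hL, Fin.val_one', Nat.mod_eq_of_lt hN, Nat.cast_one, one_mul,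
    min_eq_left]
  rw [le_sub_iff_add_le, ← two_mul, ← mul_div_assoc, div_le_iff₀ (by positivity)]
  nlinarith

end EquallySpaced

noncomputable def chordEnergy {N : ℕ} (L : ℝ) (f : ℝ → ℝ) (x : Fin N → AddCircle L)
    (m : Fin N) : ℝ :=
  ∑ i, f (dist (x i) (x (i + m)))

section Energy

variable {L : ℝ} {f : ℝ → ℝ} {N : ℕ}

theorem geodesicEnergy_comp_perm (x : Fin N → AddCircle L) (σ : Equiv.Perm (Fin N)) :
    geodesicEnergy L f (x ∘ σ) = geodesicEnergy L f x := by
  refine Fintype.sum_equiv σ _ _ fun j => Fintype.sum_equiv σ _ _ fun k => ?_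
  simp [σ.injective.eq_iff]

theorem geodesicEnergy_eq_sum_chordEnergy [NeZero N] (x : Fin N → AddCircle L) :
    geodesicEnergy L f x = ∑ m with m ≠ 0, chordEnergy L f x m := by
  have hrow (j : Fin N) : (∑ k, if j ≠ k then f (dist (x j) (x k)) else 0)
      = ∑ m, if m ≠ 0 then f (dist (x j) (x (j + m))) else 0 :=
    Fintype.sum_equiv (Equiv.subRight j) _ _ fun k => by simp [sub_eq_zero, eq_comm]
  simp only [geodesicEnergy, chordEnergy, hrow, sum_filter]
  rw [sum_comm]
  exact sum_congr rfl fun m _ => by split_ifs <;> simp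

end Energy

section MonotoneLift

-- `Y 0 ≤ … ≤ Y N = Y 0 + L` lift `w 0, …, w (N-1), w 0` to `ℝ`, once around the circle.
variable {L : ℝ} {N : ℕ} [NeZero N] {w : Fin N → AddCircle L} {Y : ℕ → ℝ}

theorem dist_succ_le_sub_of_lift (hY : Monotone Y) (hw : ∀ n ≤ N, w n = Y n) {n : ℕ}
    (hn : n < N) :
    dist (w n) (w (n + 1 : ℕ)) ≤ Y (n + 1) - Y n := by
  rw [hw n hn.le, hw (n + 1) hn, dist_comm]
  simpa [abs_of_nonneg (sub_nonneg.2 (hY n.le_succ))] using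
    AddCircle.dist_coe_le_abs_sub (L := L) (Y (n + 1)) (Y n)

theorem sum_dist_succ_le_of_lift (hY : Monotone Y) (hw : ∀ n ≤ N, w n = Y n)
    (hYN : Y N = Y 0 + L) : ∑ i, dist (w i) (w (i + 1)) ≤ L := by
  calc ∑ i, dist (w i) (w (i + 1)) = ∑ n ∈ range N, dist (w n) (w (n + 1 : ℕ)) := by
        rw [← Fin.sum_univ_eq_sum_range]; simp
    _ ≤ ∑ n ∈ range N, (Y (n + 1) - Y n) :=
        sum_le_sum fun n hn => dist_succ_le_sub_of_lift hY hw (mem_range.1 hn)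
    _ = L := by rw [sum_range_sub, hYN, add_sub_cancel_left]

theorem eq_add_equallySpaced_of_lift (hY : Monotone Y) (hw : ∀ n ≤ N, w n = Y n)
    (hYN : Y N = Y 0 + L) (hstep : ∀ i, dist (w i) (w (i + 1)) = L / N) (j : Fin N) :
    w j = Y 0 + equallySpaced L N j := by
  have hN : (N : ℝ) ≠ 0 := Nat.cast_ne_zero.2 (NeZero.ne N)
  have hAP := eq_add_mul_of_le_sub_succ (Y := Y) (N := N) (a := L / N) (fun n hn => by
      have hgap := hstep n
      rw [← Nat.cast_succ] at hgap
      linarith [dist_succ_le_sub_of_lift hY hw hn])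
    (by rw [hYN, mul_div_cancel₀ _ hN])
  rw [← Fin.cast_val_eq_self j, hw j j.isLt.le, hAP j j.isLt.le, AddCircle.coe_add,
    Fin.cast_val_eq_self]
  rfl

end MonotoneLift

section ChordEnergy

variable {L : ℝ} {f : ℝ → ℝ} {N : ℕ} [NeZero N]

theorem chordEnergy_equallySpaced (m : Fin N) :
    chordEnergy L f (equallySpaced L N) m = N * f ‖equallySpaced L N m‖ := by
  simp only [chordEnergy, equallySpaced_add, dist_self_add_right, sum_const, card_univ,
    Fintype.card_fin, nsmul_eq_mul]

theorem card_mul_le_chordEnergy (hL : 0 < L) (hanti : AntitoneOn f (Set.Icc 0 (L / 2)))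
    (hconv : ConvexOn ℝ (Set.Icc 0 (L / 2)) f) {w : Fin N → AddCircle L}
    (hw : ∑ i, dist (w i) (w (i + 1)) ≤ L) (m : Fin N) :
    N * f ‖equallySpaced L N m‖ ≤ chordEnergy L f w m := by
  have hN : (0 : ℝ) < N := by exact_mod_cast NeZero.pos N
  have hnorm :
      (N : ℝ) * ‖equallySpaced L N m‖ = min ((m : ℕ) : ℝ) (N - (m : ℕ)) * L := by
    rw [norm_equallySpaced hL, mul_min_of_nonneg _ _ hN.le, min_mul_of_nonneg _ _ hL.le]
    congr 1 <;> field_simp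
  have hmin : 0 ≤ min ((m : ℕ) : ℝ) (N - (m : ℕ)) :=
    le_min (Nat.cast_nonneg _) (sub_nonneg.2 (by exact_mod_cast m.isLt.le))
  simpa [chordEnergy] using card_mul_le_sum_of_convexOn_of_antitoneOn hconv hanti
    (t := fun i => dist (w i) (w (i + m)))
    (fun i => ⟨dist_nonneg, AddCircle.dist_le_half_period hL _ _⟩)
    (s := ‖equallySpaced L N m‖)
    ⟨norm_nonneg _, by simpa [abs_of_pos hL] using AddCircle.norm_le_half_period L hL.ne'⟩
    (by
      rw [Fintype.card_fin, hnorm]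
      exact (sum_dist_add_le_min w m).trans (mul_le_mul_of_nonneg_left hw hmin))

theorem chordEnergy_eq_of_geodesicEnergy_eq (hL : 0 < L)
    (hanti : AntitoneOn f (Set.Icc 0 (L / 2))) (hconv : ConvexOn ℝ (Set.Icc 0 (L / 2)) f)
    {w : Fin N → AddCircle L} (hw : ∑ i, dist (w i) (w (i + 1)) ≤ L)
    (henergy : geodesicEnergy L f w = geodesicEnergy L f (equallySpaced L N)) {m : Fin N}
    (hm : m ≠ 0) : chordEnergy L f w m = N * f ‖equallySpaced L N m‖ := by
  simp only [geodesicEnergy_eq_sum_chordEnergy, chordEnergy_equallySpaced] at henergy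
  exact ((sum_eq_sum_iff_of_le fun m _ => card_mul_le_chordEnergy hL hanti hconv hw m).1
    henergy.symm m (by simpa using hm)).symm

end ChordEnergy

/-- **Uniqueness of minimizers for strictly convex kernels** (Proposition 1 (A), uniqueness part):
if `f` is antitone and strictly convex on `[0, L/2]` and a configuration `x` has the same
geodesic `f`-energy as the equally spaced configuration `z_j = j·(L/N) mod L`, then `x` is
itself (up to relabelling) a translate of the equally spaced configuration. -/
theorem equally_spaced_unique_minimizer
    (L : ℝ) (hL : 0 < L) (N : ℕ) (hN : 2 ≤ N) (f : ℝ → ℝ)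
    (hanti : AntitoneOn f (Set.Icc 0 (L / 2)))
    (hconv : StrictConvexOn ℝ (Set.Icc 0 (L / 2)) f)
    (x : Fin N → AddCircle L)
    (henergy : geodesicEnergy L f x
      = geodesicEnergy L f (fun j : Fin N => (((j : ℕ) : ℝ) * (L / N) : ℝ))) :
    ∃ (c : AddCircle L) (σ : Equiv.Perm (Fin N)),
      ∀ j : Fin N, x (σ j) = c + (((j : ℕ) : ℝ) * (L / N) : ℝ) := by
  have : NeZero N := ⟨by omega⟩
  have hone : (1 : Fin N) ≠ 0 := by simp [Fin.ext_iff, Nat.mod_eq_of_lt hN]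
  obtain ⟨σ, Y, hY, hYN, hxY⟩ := AddCircle.exists_perm_monotone_lift hL x
  have hperim := sum_dist_succ_le_of_lift (w := x ∘ σ) hY hxY hYN
  have htight := chordEnergy_eq_of_geodesicEnergy_eq hL hanti hconv.convexOn hperim
    ((geodesicEnergy_comp_perm x σ).trans henergy) hone
  rw [norm_equallySpaced_one hL hN] at htight
  have hstep := eq_of_sum_le_of_strictConvexOn_of_antitoneOn hconv hanti
    (t := fun i => dist (x (σ i)) (x (σ (i + 1))))
    (fun i => ⟨dist_nonneg, AddCircle.dist_le_half_period hL _ _⟩) (s := L / N)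
    ⟨by positivity, div_le_div_of_nonneg_left hL.le two_pos (by exact_mod_cast hN)⟩
    (by rwa [Fintype.card_fin, mul_div_cancel₀ L (NeZero.ne (N : ℝ))])
    (by simpa [chordEnergy] using htight.le)
  exact ⟨Y 0, σ, eq_add_equallySpaced_of_lift hY hxY hYN hstep⟩
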